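/- arXiv:1810.05713 — 2 statements merged into one kernel-verified Lean document; each statement's English description precedes it below -/
import Mathlib

section
/- Let q be a probability measure on ℝ^d, let u ≥ 1, let g : ℝ^d → ℝ^u be measurable, let x ∈ ℝ^u, and let σ : Fin u → ℝ with σ_i > 0 for all i. Define p(x|w) = ∏_{i=1}^{u} (2π σ_i²)^{−1/2} exp(−(x_i − g_i(w))²/(2σ_i²)), the density of a Gaussian with independent coordinates, mean g(w), and variances σ_i². Assume w ↦ p(x|w) is q-integrable with ∫ p(x|w) dq(w) > 0 and that w ↦ Σ_i (x_i − g_i(w))² is q-integrable. Then −log(∫ p(x|w) dq(w)) ≤ ∫ [ Σ_{i=1}^{u} ( (x_i − g_i(w))²/(2σ_i²) + (1/2) log σ_i² ) ] dq(w) + (u/2)·log(2π). -/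
/-!
The Gaussian likelihood `p(x|w)` is strictly positive and `-log p(x|w)` is exactly the
integrand on the right plus `(u/2) log 2π`, so the bound is Jensen's inequality
`∫ log p ≤ log ∫ p` for the concave logarithm. As `log` is concave only on the open half-line, Jensen is proved
directly from the tangent line `log t ≤ log m + t / m - 1` at `m = ∫ p`.
-/

open MeasureTheory Real

section Jensen

variable {α : Type*} [MeasurableSpace α] {μ : Measure α} [IsProbabilityMeasure μ]

theorem integral_pos_of_ae_pos {f : α → ℝ} (hf_pos : ∀ᵐ a ∂μ, 0 < f a) (hf : Integrable f μ) :
    0 < ∫ a, f a ∂μ := by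
  rw [integral_pos_iff_support_of_nonneg_ae (hf_pos.mono fun _ h => h.le) hf]
  exact pos_iff_ne_zero.2 (frequently_ae_mem_iff.1 (hf_pos.mono fun _ h => h.ne').frequently)

theorem integral_log_le_log_integral {f : α → ℝ} (hf_pos : ∀ᵐ a ∂μ, 0 < f a)
    (hf : Integrable f μ) (hlog : Integrable (fun a => log (f a)) μ) :
    ∫ a, log (f a) ∂μ ≤ log (∫ a, f a ∂μ) := by
  set m := ∫ a, f a ∂μ
  have hm : 0 < m := integral_pos_of_ae_pos hf_pos hf
  have htangent : ∀ᵐ a ∂μ, log (f a) ≤ log m + (f a / m - 1) := by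
    filter_upwards [hf_pos] with a ha
    have := log_le_sub_one_of_pos (div_pos ha hm)
    rw [log_div ha.ne' hm.ne'] at this
    linarith
  have hrhs : Integrable (fun a => f a / m - 1) μ := (hf.div_const m).sub (integrable_const _)
  calc ∫ a, log (f a) ∂μ
      ≤ ∫ a, (log m + (f a / m - 1)) ∂μ :=
        integral_mono_ae hlog ((integrable_const _).add hrhs) htangent
    _ = log m := by
        rw [integral_add (integrable_const _) hrhs, integral_sub (hf.div_const m)
          (integrable_const _), integral_div, div_self hm.ne']
        simp

end Jensen

theorem MeasureTheory.Integrable.of_sum_of_nonneg {α ι : Type*} [MeasurableSpace α] {μ : Measure α}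
    [Fintype ι] {f : ι → α → ℝ} (hf_nonneg : ∀ i a, 0 ≤ f i a)
    (hf_meas : ∀ i, AEStronglyMeasurable (f i) μ)
    (hsum : Integrable (fun a => ∑ i, f i a) μ) (i : ι) : Integrable (f i) μ :=
  hsum.mono' (hf_meas i) <| .of_forall fun a => by
    rw [norm_of_nonneg (hf_nonneg i a)]
    exact Finset.single_le_sum (fun j _ => hf_nonneg j a) (Finset.mem_univ i)

theorem gaussian_factor_pos {s : ℝ} (hs : 0 < s) (t : ℝ) :
    0 < (2 * π * s) ^ (-(1:ℝ)/2) * exp (-t / (2 * s)) := by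
  positivity

theorem log_gaussian_factor {s : ℝ} (hs : 0 < s) (t : ℝ) :
    log ((2 * π * s) ^ (-(1:ℝ)/2) * exp (-t / (2 * s)))
      = -(t / (2 * s) + 1/2 * log s) - 1/2 * log (2 * π) := by
  have h2π : 0 < 2 * π := by positivity
  rw [log_mul (by positivity) (exp_ne_zero _), log_rpow (by positivity), log_exp,
    log_mul h2π.ne' hs.ne']
  ring

theorem neg_log_marginal_likelihood_le_gaussian_bound_general
    {d u : ℕ}
    (q : Measure (Fin d → ℝ)) [IsProbabilityMeasure q]
    (g : (Fin d → ℝ) → (Fin u → ℝ)) (hg : Measurable g)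
    (x : Fin u → ℝ) (σ : Fin u → ℝ) (hσ : ∀ i, 0 < σ i)
    (p : (Fin d → ℝ) → ℝ)
    (hp : ∀ w, p w =
      ∏ i : Fin u, (2 * π * σ i ^ 2) ^ (-(1:ℝ)/2) *
        Real.exp (-(x i - g w i) ^ 2 / (2 * σ i ^ 2)))
    (hp_int : Integrable p q)
    (hsq_int : Integrable (fun w => ∑ i : Fin u, (x i - g w i) ^ 2) q) :
    -Real.log (∫ w, p w ∂q) ≤
      (∫ w, ∑ i : Fin u,
          ((x i - g w i) ^ 2 / (2 * σ i ^ 2) + (1/2) * Real.log (σ i ^ 2)) ∂q)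
        + (u / 2 : ℝ) * Real.log (2 * π) := by
  set F := fun w => ∑ i : Fin u,
    ((x i - g w i) ^ 2 / (2 * σ i ^ 2) + (1/2) * Real.log (σ i ^ 2))
  have hσ2 : ∀ i, 0 < σ i ^ 2 := fun i => pow_pos (hσ i) 2
  have hp_pos : ∀ w, 0 < p w := fun w => by
    rw [hp w]
    exact Finset.prod_pos fun i _ => gaussian_factor_pos (hσ2 i) _
  have hlog_p : (fun w => log (p w)) = fun w => -F w - (u / 2 : ℝ) * log (2 * π) := by
    ext w
    rw [hp w, log_prod fun i _ => (gaussian_factor_pos (hσ2 i) _).ne']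
    simp only [log_gaussian_factor (hσ2 _), Finset.sum_sub_distrib, Finset.sum_neg_distrib,
      Finset.sum_const, Finset.card_univ, Fintype.card_fin, nsmul_eq_mul, F]
    ring
  have hsq_int_i := hsq_int.of_sum_of_nonneg (fun i w => sq_nonneg (x i - g w i))
    fun i => (measurable_const.sub ((measurable_pi_apply i).comp hg)).pow_const 2
      |>.aestronglyMeasurable
  have hF_int : Integrable F q :=
    integrable_finsetSum _ fun i _ => ((hsq_int_i i).div_const _).add (integrable_const _)
  have hjensen := integral_log_le_log_integral (.of_forall hp_pos) hp_int
    (hlog_p ▸ hF_int.neg.sub (integrable_const _))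
  rw [hlog_p, integral_sub hF_int.fun_neg (integrable_const _), integral_neg, integral_const]
    at hjensen
  simp only [probReal_univ, one_smul] at hjensen
  linarith

/-- Variational (Jensen) upper bound on the negative log-likelihood of a Gaussian
decoder with independent coordinates: the negative marginal log-likelihood is bounded
by the expected scaled squared error plus log-variance terms plus a constant. -/
theorem neg_log_marginal_likelihood_le_gaussian_bound
    {d u : ℕ} (hu : 1 ≤ u)
    (q : Measure (Fin d → ℝ)) [IsProbabilityMeasure q]
    (g : (Fin d → ℝ) → (Fin u → ℝ)) (hg : Measurable g)
    (x : Fin u → ℝ) (σ : Fin u → ℝ) (hσ : ∀ i, 0 < σ i)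
    (p : (Fin d → ℝ) → ℝ)
    (hp : ∀ w, p w =
      ∏ i : Fin u, (2 * π * σ i ^ 2) ^ (-(1:ℝ)/2) *
        Real.exp (-(x i - g w i) ^ 2 / (2 * σ i ^ 2)))
    (hp_int : Integrable p q) (hp_pos : 0 < ∫ w, p w ∂q)
    (hsq_int : Integrable (fun w => ∑ i : Fin u, (x i - g w i) ^ 2) q) :
    -Real.log (∫ w, p w ∂q) ≤
      (∫ w, ∑ i : Fin u,
          ((x i - g w i) ^ 2 / (2 * σ i ^ 2) + (1/2) * Real.log (σ i ^ 2)) ∂q)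
        + (u / 2 : ℝ) * Real.log (2 * π) :=
  neg_log_marginal_likelihood_le_gaussian_bound_general q g hg x σ hσ p hp hp_int hsq_int
end

section
/- Let μ be a probability measure on ℝ supported in [0,1], let f : ℝ → ℝ have bounded total variation V on [0,1] (V = eVariationOn f [0,1] < ∞), and let z_1, …, z_m ∈ [0,1] with m ≥ 1. Define the discrepancy D* = sup_{t ∈ [0,1]} | μ((−∞, t]) − (1/m)·#{i : z_i ≤ t} |. If f is μ-integrable, then | ∫ f dμ − (1/m) Σ_{i=1}^{m} f(z_i) | ≤ V · D*. -/
/-!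
Split `f` on `[0,1]` as `p - q` with `p, q` monotone and `(p 1 - p 0) + (q 1 - q 0) = V[f]`, and
extend both to monotone functions on `ℝ` that are constant outside `[0,1]`. For a monotone `g`
with values in `[a, b]`, the layer-cake formula writes `∫ g dμ - ∫ g dν` as an integral over
`t ∈ (0, b - a]` of `μ U_t - ν U_t`, where the level sets `U_t = {x | t ≤ g x - a}` are upper sets
of `ℝ`, hence half-lines. The measure of a half-line is `1 - F(c)` or `1 - F(c⁻)` for the
distribution function `F`, and the discrepancy bound on `F` passes to left limits, so each
integrand is at most `D*`. The empirical average is the integral against the empirical measure.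
-/

open MeasureTheory Set Filter Topology
open scoped ENNReal

theorem IsUpperSet.eq_empty_or_univ_or_Ici_or_Ioi {α : Type*}
    [ConditionallyCompleteLinearOrder α] {U : Set α} (hU : IsUpperSet U) :
    U = ∅ ∨ U = univ ∨ (∃ c, U = Ici c) ∨ ∃ c, U = Ioi c := by
  rcases U.eq_empty_or_nonempty with hempty | hne
  · exact Or.inl hempty
  by_cases hbdd : BddBelow U
  · by_cases hc : sInf U ∈ U
    · exact Or.inr <| Or.inr <| Or.inl ⟨sInf U, subset_antisymm (fun x hx => csInf_le hbdd hx)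
        (hU.Ici_subset hc)⟩
    · refine Or.inr <| Or.inr <| Or.inr ⟨sInf U, subset_antisymm
        (fun x hx => (csInf_le hbdd hx).lt_of_ne fun h => hc (h ▸ hx)) fun x hx => ?_⟩
      obtain ⟨y, hy, hyx⟩ := exists_lt_of_csInf_lt hne hx
      exact hU hyx.le hy
  · refine Or.inr <| Or.inl <| eq_univ_of_forall fun x => ?_
    obtain ⟨y, hy, hyx⟩ := not_bddBelow_iff.1 hbdd x
    exact hU hyx.le hy

theorem MonotoneOn.exists_monotone_eqOn_Icc {α β : Type*} [LinearOrder α] [Preorder β]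
    {f : α → β} {a b : α} (hab : a ≤ b) (hf : MonotoneOn f (Icc a b)) :
    ∃ g : α → β, Monotone g ∧ EqOn g f (Icc a b) ∧ ∀ x, g x ∈ Icc (f a) (f b) := by
  refine ⟨IccExtend hab ((Icc a b).domRestrict f), (monotoneOn_iff_monotone.1 hf).IccExtend hab,
    fun x hx => IccExtend_of_mem hab _ hx, fun x => ?_⟩
  have hx := (projIcc a b hab x).2
  exact ⟨hf (left_mem_Icc.2 hab) hx hx.1, hf hx (right_mem_Icc.2 hab) hx.2⟩

theorem abs_measureReal_compl_sub_measureReal_compl {Ω : Type*} [MeasurableSpace Ω]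
    {μ ν : Measure Ω} [IsProbabilityMeasure μ] [IsProbabilityMeasure ν] {s : Set Ω}
    (hs : MeasurableSet s) : |μ.real sᶜ - ν.real sᶜ| = |μ.real s - ν.real s| := by
  rw [probReal_compl_eq_one_sub hs, probReal_compl_eq_one_sub hs, sub_sub_sub_cancel_left,
    abs_sub_comm]

section Discrepancy

variable {μ ν : Measure ℝ} {D : ℝ}

theorem abs_measureReal_Iio_sub_le [IsFiniteMeasure μ] [IsFiniteMeasure ν]
    (hD : ∀ x, |μ.real (Iic x) - ν.real (Iic x)| ≤ D) (c : ℝ) :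
    |μ.real (Iio c) - ν.real (Iio c)| ≤ D := by
  obtain ⟨u, hu_mono, hu_lt, hu_lim⟩ := exists_seq_strictMono_tendsto c
  have hunion : ⋃ n, Iic (u n) = Iio c := iUnion_Iic_eq_Iio_of_lt_of_tendsto hu_lt hu_lim
  have hIic : Monotone fun n => Iic (u n) := fun _ _ h => Iic_subset_Iic.2 (hu_mono.monotone h)
  have tendsto_Iio (ρ : Measure ℝ) [IsFiniteMeasure ρ] :
      Tendsto (fun n => ρ.real (Iic (u n))) atTop (𝓝 (ρ.real (Iio c))) := by
    rw [← hunion]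
    exact (ENNReal.tendsto_toReal (measure_ne_top _ _)).comp (tendsto_measure_iUnion_atTop hIic)
  exact le_of_tendsto' ((tendsto_Iio μ).sub (tendsto_Iio ν)).abs fun n => hD (u n)

theorem IsUpperSet.abs_measureReal_sub_le [IsProbabilityMeasure μ] [IsProbabilityMeasure ν]
    (hD : ∀ x, |μ.real (Iic x) - ν.real (Iic x)| ≤ D) {U : Set ℝ} (hU : IsUpperSet U) :
    |μ.real U - ν.real U| ≤ D := by
  have hD0 : 0 ≤ D := (abs_nonneg _).trans (hD 0)
  rcases hU.eq_empty_or_univ_or_Ici_or_Ioi with rfl | rfl | ⟨c, rfl⟩ | ⟨c, rfl⟩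
  · simpa using hD0
  · simpa using hD0
  · rw [← compl_Iio, abs_measureReal_compl_sub_measureReal_compl measurableSet_Iio]
    exact abs_measureReal_Iio_sub_le hD c
  · rw [← compl_Iic, abs_measureReal_compl_sub_measureReal_compl measurableSet_Iic]
    exact hD c

theorem Monotone.integrable_of_mem_Icc [IsFiniteMeasure μ] {g : ℝ → ℝ} (hg : Monotone g)
    {a b : ℝ} (hgab : ∀ x, g x ∈ Icc a b) : Integrable g μ :=
  .of_bound hg.measurable.aestronglyMeasurable (max |a| |b|) <| ae_of_all _ fun x =>
    abs_le_max_abs_abs (hgab x).1 (hgab x).2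

theorem Monotone.abs_integral_sub_integral_le [IsProbabilityMeasure μ] [IsProbabilityMeasure ν]
    (hD : ∀ x, |μ.real (Iic x) - ν.real (Iic x)| ≤ D) {g : ℝ → ℝ} (hg : Monotone g) {a b : ℝ}
    (hgab : ∀ x, g x ∈ Icc a b) :
    |∫ x, g x ∂μ - ∫ x, g x ∂ν| ≤ (b - a) * D := by
  have hab : a ≤ b := (hgab 0).1.trans (hgab 0).2
  have layercake (ρ : Measure ℝ) [IsProbabilityMeasure ρ] :
      ∫ x, g x ∂ρ = a + ∫ t in 0..b - a, ρ.real {x | t ≤ g x - a} := by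
    have hint : Integrable (fun x => g x - a) ρ :=
      (hg.integrable_of_mem_Icc hgab).sub (integrable_const a)
    rw [intervalIntegral.integral_of_le (sub_nonneg.2 hab),
      ← hint.integral_eq_integral_Ioc_meas_le (ae_of_all _ fun x => sub_nonneg.2 (hgab x).1)
        (ae_of_all _ fun x => sub_le_sub_right (hgab x).2 a),
      integral_sub (hg.integrable_of_mem_Icc hgab) (integrable_const a)]
    simp
  have hanti (ρ : Measure ℝ) [IsFiniteMeasure ρ] : Antitone fun t => ρ.real {x | t ≤ g x - a} :=
    fun _ _ hst => measureReal_mono fun _ hx => hst.trans hx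
  have hlevel (t : ℝ) : IsUpperSet {x | t ≤ g x - a} := fun _ _ hxy hx =>
    hx.trans (sub_le_sub_right (hg hxy) a)
  rw [layercake μ, layercake ν, add_sub_add_left_eq_sub,
    ← intervalIntegral.integral_sub (hanti μ).intervalIntegrable (hanti ν).intervalIntegrable]
  have hbound (t : ℝ) : ‖μ.real {x | t ≤ g x - a} - ν.real {x | t ≤ g x - a}‖ ≤ D :=
    (hlevel t).abs_measureReal_sub_le hD
  refine (intervalIntegral.norm_integral_le_of_norm_le_const fun t _ => hbound t).trans_eq ?_
  rw [sub_zero, abs_of_nonneg (sub_nonneg.2 hab), mul_comm]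

theorem abs_measureReal_Iic_sub_le_of_forall_mem_Icc [IsProbabilityMeasure μ]
    [IsProbabilityMeasure ν] {a b : ℝ} (hab : a ≤ b) (hμ : μ (Icc a b)ᶜ = 0)
    (hν : ν (Icc a b)ᶜ = 0) (hD : ∀ x ∈ Icc a b, |μ.real (Iic x) - ν.real (Iic x)| ≤ D)
    (x : ℝ) : |μ.real (Iic x) - ν.real (Iic x)| ≤ D := by
  have hD0 : 0 ≤ D := (abs_nonneg _).trans (hD a (left_mem_Icc.2 hab))
  rcases lt_or_ge x a with hxa | hax
  · have hnull : Iic x ⊆ (Icc a b)ᶜ := fun y (hy : y ≤ x) hy' => (hy.trans_lt hxa).not_ge hy'.1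
    simpa [measureReal_def, measure_mono_null hnull hμ, measure_mono_null hnull hν] using hD0
  rcases le_or_gt x b with hxb | hbx
  · exact hD x ⟨hax, hxb⟩
  · have hfull (ρ : Measure ℝ) [IsProbabilityMeasure ρ] (hρ : ρ (Icc a b)ᶜ = 0) :
        ρ.real (Iic x) = 1 := by
      have hsub : (Iic x)ᶜ ⊆ (Icc a b)ᶜ :=
        compl_subset_compl.2 (Icc_subset_Iic_self.trans (Iic_subset_Iic.2 hbx.le))
      rw [measureReal_def, (prob_compl_eq_zero_iff measurableSet_Iic).1
        (measure_mono_null hsub hρ), ENNReal.toReal_one]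
    simpa [hfull μ hμ, hfull ν hν] using hD0

theorem abs_integral_sub_integral_le_eVariationOn_mul [IsProbabilityMeasure μ]
    [IsProbabilityMeasure ν] {a b : ℝ} (hab : a ≤ b) (hμ : μ (Icc a b)ᶜ = 0)
    (hν : ν (Icc a b)ᶜ = 0) (hD : ∀ x ∈ Icc a b, |μ.real (Iic x) - ν.real (Iic x)| ≤ D)
    {f : ℝ → ℝ} (hf : BoundedVariationOn f (Icc a b)) :
    |∫ x, f x ∂μ - ∫ x, f x ∂ν| ≤ (eVariationOn f (Icc a b)).toReal * D := by
  have hD' := abs_measureReal_Iic_sub_le_of_forall_mem_Icc hab hμ hν hD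
  obtain ⟨p, q, hp, hq, rfl, hvar⟩ :=
    hf.locallyBoundedVariationOn.exists_monotoneOn_sub_monotoneOn'
  obtain ⟨P, hP, hPp, hPab⟩ := hp.exists_monotone_eqOn_Icc hab
  obtain ⟨Q, hQ, hQq, hQab⟩ := hq.exists_monotone_eqOn_Icc hab
  have hsplit (ρ : Measure ℝ) [IsProbabilityMeasure ρ] (hρ : ρ (Icc a b)ᶜ = 0) :
      ∫ x, (p - q) x ∂ρ = ∫ x, P x ∂ρ - ∫ x, Q x ∂ρ := by
    rw [← integral_sub (hP.integrable_of_mem_Icc hPab) (hQ.integrable_of_mem_Icc hQab)]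
    refine integral_congr_ae ?_
    filter_upwards [mem_ae_iff.2 hρ] with x hx
    simp [hPp hx, hQq hx]
  have hV : (p b - p a) + (q b - q a) = (eVariationOn (p - q) (Icc a b)).toReal := by
    rw [hvar a (left_mem_Icc.2 hab) b (right_mem_Icc.2 hab), variationOnFromTo.eq_of_le _ _ hab,
      inter_self]
  rw [hsplit μ hμ, hsplit ν hν, ← hV]
  calc |(∫ x, P x ∂μ - ∫ x, Q x ∂μ) - (∫ x, P x ∂ν - ∫ x, Q x ∂ν)|
      ≤ |∫ x, P x ∂μ - ∫ x, P x ∂ν| + |∫ x, Q x ∂μ - ∫ x, Q x ∂ν| := by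
        rw [sub_sub_sub_comm]; exact abs_sub _ _
    _ ≤ (p b - p a) * D + (q b - q a) * D :=
        add_le_add (hP.abs_integral_sub_integral_le hD' hPab)
          (hQ.abs_integral_sub_integral_le hD' hQab)
    _ = _ := (add_mul _ _ _).symm

theorem abs_measureReal_Iic_sub_le_biSup [IsProbabilityMeasure μ] [IsProbabilityMeasure ν]
    {s : Set ℝ} {x : ℝ} (hx : x ∈ s) :
    |μ.real (Iic x) - ν.real (Iic x)| ≤ ⨆ t ∈ s, |μ.real (Iic t) - ν.real (Iic t)| := by
  refine le_ciSup₂ (f := fun t (_ : t ∈ s) => |μ.real (Iic t) - ν.real (Iic t)|) ⟨1, ?_⟩ x hx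
  rintro _ ⟨_, ⟨t, rfl⟩, ⟨_, rfl⟩⟩
  exact abs_sub_le_of_nonneg_of_le measureReal_nonneg measureReal_le_one measureReal_nonneg
    measureReal_le_one

end Discrepancy

noncomputable def empiricalMeasure {α ι : Type*} [MeasurableSpace α] [Fintype ι] (z : ι → α) :
    Measure α :=
  (Fintype.card ι : ℝ≥0∞)⁻¹ • ∑ i, Measure.dirac (z i)

section EmpiricalMeasure

variable {α ι : Type*} [MeasurableSpace α] [MeasurableSingletonClass α] [Fintype ι] (z : ι → α)

theorem empiricalMeasure_apply (s : Set α) [DecidablePred (· ∈ s)] :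
    empiricalMeasure z s = (Finset.univ.filter fun i => z i ∈ s).card / Fintype.card ι := by
  simp [empiricalMeasure, Measure.dirac_apply, indicator_apply, Finset.sum_boole,
    ENNReal.div_eq_inv_mul]

instance isProbabilityMeasure_empiricalMeasure [Nonempty ι] :
    IsProbabilityMeasure (empiricalMeasure z) := by
  classical
  constructor
  rw [empiricalMeasure_apply]
  simp [ENNReal.div_self]

theorem integral_empiricalMeasure {E : Type*} [NormedAddCommGroup E] [NormedSpace ℝ E]
    [CompleteSpace E] (f : α → E) :
    ∫ x, f x ∂empiricalMeasure z = (Fintype.card ι : ℝ)⁻¹ • ∑ i, f (z i) := by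
  rw [empiricalMeasure, integral_smul_measure,
    integral_finsetSum_measure fun i _ => integrable_dirac enorm_lt_top]
  simp

theorem empiricalMeasure_compl_eq_zero {s : Set α} (hz : ∀ i, z i ∈ s) :
    empiricalMeasure z sᶜ = 0 := by
  classical
  simp [empiricalMeasure_apply, hz]

end EmpiricalMeasure

theorem abs_integral_sub_average_le_variation_mul_discrepancy_general
    (μ : Measure ℝ) [IsProbabilityMeasure μ] (hsupp : μ (Set.Icc (0:ℝ) 1)ᶜ = 0)
    (f : ℝ → ℝ) (hV : eVariationOn f (Set.Icc (0:ℝ) 1) ≠ ⊤)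
    {m : ℕ} (hm : 1 ≤ m) (z : Fin m → ℝ) (hz : ∀ i, z i ∈ Set.Icc (0:ℝ) 1) :
    |(∫ s, f s ∂μ) - (∑ i : Fin m, f (z i)) / m| ≤
      (eVariationOn f (Set.Icc (0:ℝ) 1)).toReal *
        ⨆ t ∈ Set.Icc (0:ℝ) 1,
          |(μ (Set.Iic t)).toReal -
            ((Finset.univ.filter (fun i : Fin m => z i ≤ t)).card : ℝ) / m| := by
  have : Nonempty (Fin m) := ⟨⟨0, hm⟩⟩
  have hcdf (t : ℝ) : (empiricalMeasure z).real (Iic t) =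
      ((Finset.univ.filter (fun i : Fin m => z i ≤ t)).card : ℝ) / m := by
    simp [measureReal_def, empiricalMeasure_apply]
  have hmean : (∑ i : Fin m, f (z i)) / m = ∫ x, f x ∂empiricalMeasure z := by
    simp [integral_empiricalMeasure, div_eq_inv_mul]
  simp only [← measureReal_def, ← hcdf, hmean]
  exact abs_integral_sub_integral_le_eVariationOn_mul zero_le_one hsupp
    (empiricalMeasure_compl_eq_zero z hz) (fun _ hx => abs_measureReal_Iic_sub_le_biSup hx) hV

/-- One-dimensional Koksma–Hlawka inequality: for a probability measure `μ` supported in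
`[0,1]`, a function `f` of bounded total variation `V` on `[0,1]`, and points
`z₁, …, z_m ∈ [0,1]`, the gap between `∫ f dμ` and the empirical average `(1/m) ∑ f(zᵢ)`
is at most `V · D*`, where `D*` is the star discrepancy (Kolmogorov–Smirnov distance)
between `μ` and the empirical measure of the points. -/
theorem abs_integral_sub_average_le_variation_mul_discrepancy
    (μ : Measure ℝ) [IsProbabilityMeasure μ] (hsupp : μ (Set.Icc (0:ℝ) 1)ᶜ = 0)
    (f : ℝ → ℝ) (hV : eVariationOn f (Set.Icc (0:ℝ) 1) ≠ ⊤)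
    {m : ℕ} (hm : 1 ≤ m) (z : Fin m → ℝ) (hz : ∀ i, z i ∈ Set.Icc (0:ℝ) 1)
    (hf_int : Integrable f μ) :
    |(∫ s, f s ∂μ) - (∑ i : Fin m, f (z i)) / m| ≤
      (eVariationOn f (Set.Icc (0:ℝ) 1)).toReal *
        ⨆ t ∈ Set.Icc (0:ℝ) 1,
          |(μ (Set.Iic t)).toReal -
            ((Finset.univ.filter (fun i : Fin m => z i ≤ t)).card : ℝ) / m| :=
  abs_integral_sub_average_le_variation_mul_discrepancy_general μ hsupp f hV hm z hz
end
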